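/- Let n, k ≥ 1 and let u be a binary word of length n−1. Then d_{n+k}(u 0^k) ≤ C(n+k, k) · d_n(u), where u 0^k denotes the word u followed by k letters 0, and C(n+k, k) is the binomial coefficient. -/

import Mathlib

/-!
A permutation of `Fin (n + k)` with descent word `u 0^k` is increasing on its last `k`
positions, so it is determined by the set of its values there (one of `C(n+k, k)` sets) together
with the relative order of its values on the first `n` positions. That relative order, i.e. the
standardization of the first block, is a permutation of `Fin n` with descent word `u`.
-/

/-- For a finite binary word `u` of length `n - 1` (so `n = u.length + 1`), `dCountL u` is
the number of permutations `π` of `{1,…,n}` (modeled as `Fin n`, zero-based) such that for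
every `1 ≤ i ≤ n-1`, `π(i) > π(i+1)` iff the `i`-th letter of `u` equals `1` (i.e. `true`). -/
noncomputable def dCountL (u : List Bool) : ℕ :=
  Nat.card {π : Equiv.Perm (Fin (u.length + 1)) //
    ∀ i : Fin u.length, (π i.succ < π i.castSucc ↔ u.get i = true)}

open Equiv Function Set

-- Indexed by `ℕ` so that the size `N` need not be syntactically `w.length + 1`.
def HasDescentWord (w : List Bool) {N : ℕ} (π : Perm (Fin N)) : Prop :=
  ∀ i (hi : i + 1 < N), (π ⟨i + 1, hi⟩ < π ⟨i, by omega⟩ ↔ w[i]? = some true)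

theorem dCountL_eq_card (w : List Bool) {N : ℕ} (hN : w.length + 1 = N) :
    dCountL w = Nat.card {π : Perm (Fin N) // HasDescentWord w π} := by
  subst hN
  unfold dCountL HasDescentWord
  congr! 3 with π
  simp only [Fin.forall_iff, List.getElem?_eq_some_iff, Fin.succ_mk, Fin.castSucc_mk,
    List.get_eq_getElem, Nat.add_lt_add_iff_right]
  exact forall₂_congr fun i hi => by simp [hi]

theorem HasDescentWord.lt_of_getElem?_eq_false {w : List Bool} {N : ℕ} {π : Perm (Fin N)}
    (hπ : HasDescentWord w π) {i : ℕ} (hi : i + 1 < N) (hw : w[i]? = some false) :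
    π ⟨i, by omega⟩ < π ⟨i + 1, hi⟩ := by
  have hne : π ⟨i, by omega⟩ ≠ π ⟨i + 1, hi⟩ := by simp [Fin.ext_iff]
  exact lt_of_le_of_ne (not_lt.mp fun h => by simpa [hw] using (hπ i hi).mp h) hne

-- For injective `f`, `standardize f i` is the rank of `f i` among the values of `f`.
def standardize {α : Type*} [LinearOrder α] {m : ℕ} (f : Fin m → α) : Perm (Fin m) :=
  (Tuple.sort f).symm

section Standardize

variable {α : Type*} [LinearOrder α] {m : ℕ} {f g : Fin m → α}

theorem Tuple.strictMono_comp_sort (hf : Injective f) : StrictMono (f ∘ Tuple.sort f) :=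
  (Tuple.monotone_sort f).strictMono_of_injective (hf.comp (Tuple.sort f).injective)

theorem standardize_lt_standardize_iff (hf : Injective f) {i j : Fin m} :
    standardize f i < standardize f j ↔ f i < f j := by
  conv_rhs => rw [← (Tuple.sort f).apply_symm_apply i, ← (Tuple.sort f).apply_symm_apply j]
  exact (Tuple.strictMono_comp_sort hf).lt_iff_lt.symm

theorem eq_of_range_eq_of_standardize_eq (hf : Injective f) (hg : Injective g)
    (hrange : range f = range g) (hstd : standardize f = standardize g) : f = g := by
  have hsort : Tuple.sort f = Tuple.sort g := by
    simpa [standardize] using congrArg Equiv.symm hstd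
  have hcomp : f ∘ Tuple.sort f = g ∘ Tuple.sort f := by
    rw [← (Tuple.strictMono_comp_sort hf).range_inj (hsort ▸ Tuple.strictMono_comp_sort hg),
      range_comp, range_comp, (Tuple.sort f).range_eq_univ, image_univ, image_univ, hrange]
  funext i
  simpa using congrFun hcomp ((Tuple.sort f).symm i)

end Standardize

theorem Fin.range_castAdd_eq_compl (n k : ℕ) :
    range (Fin.castAdd k : Fin n → Fin (n + k)) = (range (Fin.natAdd n))ᶜ := by
  ext i; induction i using Fin.addCases <;> simp [Fin.ext_iff] <;> omega

section Blocks

variable {n k : ℕ}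

theorem perm_eq_of_blocks {π₁ π₂ : Perm (Fin (n + k))}
    (h₁ : StrictMono (π₁ ∘ Fin.natAdd n)) (h₂ : StrictMono (π₂ ∘ Fin.natAdd n))
    (hrange : range (π₁ ∘ Fin.natAdd n) = range (π₂ ∘ Fin.natAdd n))
    (hstd : standardize (π₁ ∘ Fin.castAdd k) = standardize (π₂ ∘ Fin.castAdd k)) :
    π₁ = π₂ := by
  have range_castAdd (π : Perm (Fin (n + k))) :
      range (π ∘ Fin.castAdd k) = (range (π ∘ Fin.natAdd n))ᶜ := by
    rw [range_comp, range_comp, Fin.range_castAdd_eq_compl, π.image_compl]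
  have hlast : π₁ ∘ Fin.natAdd n = π₂ ∘ Fin.natAdd n := (h₁.range_inj h₂).mp hrange
  have hfirst : π₁ ∘ Fin.castAdd k = π₂ ∘ Fin.castAdd k :=
    eq_of_range_eq_of_standardize_eq (π₁.injective.comp (Fin.castAdd_injective n k))
      (π₂.injective.comp (Fin.castAdd_injective n k))
      (by rw [range_castAdd, range_castAdd, hrange]) hstd
  refine Equiv.ext fun i => ?_
  induction i using Fin.addCases with
  | left i => exact congrFun hfirst i
  | right j => exact congrFun hlast j

theorem card_le_choose_mul_card {P : Perm (Fin (n + k)) → Prop} {Q : Perm (Fin n) → Prop}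
    (hmono : ∀ π, P π → StrictMono (π ∘ Fin.natAdd n))
    (hstd : ∀ π, P π → Q (standardize (π ∘ Fin.castAdd k))) :
    Nat.card {π // P π} ≤ (n + k).choose k * Nat.card {σ // Q σ} := by
  classical
  let Φ : {π // P π} → {s : Finset (Fin (n + k)) // s.card = k} × {σ // Q σ} := fun π =>
    (⟨Finset.univ.image (π.1 ∘ Fin.natAdd n), by
      rw [Finset.card_image_of_injective _ (hmono π.1 π.2).injective, Finset.card_univ,
        Fintype.card_fin]⟩, ⟨_, hstd π.1 π.2⟩)
  have hΦ : Injective Φ := by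
    rintro ⟨π₁, hπ₁⟩ ⟨π₂, hπ₂⟩ h
    simp only [Φ, Prod.mk.injEq, Subtype.mk.injEq] at h
    refine Subtype.ext (perm_eq_of_blocks (hmono π₁ hπ₁) (hmono π₂ hπ₂) ?_ h.2)
    simpa [comp_def] using congrArg (fun s : Finset _ => (s : Set (Fin (n + k)))) h.1
  calc Nat.card {π // P π} ≤ Nat.card ({s : Finset (Fin (n + k)) // s.card = k} × {σ // Q σ}) :=
        Nat.card_le_card_of_injective Φ hΦ
    _ = (n + k).choose k * Nat.card {σ // Q σ} := by
        rw [Nat.card_prod, Nat.card_eq_fintype_card, Fintype.card_finset_len, Fintype.card_fin]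

end Blocks

theorem HasDescentWord.standardize_castAdd {u v : List Bool} {n k : ℕ} (hun : u.length + 1 = n)
    {π : Perm (Fin (n + k))} (hπ : HasDescentWord (u ++ v) π) :
    HasDescentWord u (standardize (π ∘ Fin.castAdd k)) := by
  intro i hi
  rw [standardize_lt_standardize_iff (π.injective.comp (Fin.castAdd_injective n k))]
  simpa [List.getElem?_append_left (show i < u.length by omega)] using hπ i (by omega)

theorem HasDescentWord.strictMono_natAdd {u : List Bool} {n k : ℕ} (hun : u.length + 1 = n)
    {π : Perm (Fin (n + k))} (hπ : HasDescentWord (u ++ List.replicate k false) π) :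
    StrictMono (π ∘ Fin.natAdd n) := by
  cases k with
  | zero => exact Subsingleton.strictMono _
  | succ k =>
    refine Fin.strictMono_iff_lt_succ.mpr fun j => ?_
    have hw : (u ++ List.replicate (k + 1) false)[n + j]? = some false := by
      rw [List.getElem?_append_right (by omega), List.getElem?_replicate]
      simp only [if_pos (show n + j - u.length < k + 1 by omega)]
    exact hπ.lt_of_getElem?_eq_false (i := n + j) (by omega) hw

theorem stmt6_general (n k : ℕ) (hn : 1 ≤ n) (u : List Bool)
    (hu : u.length = n - 1) :
    dCountL (u ++ List.replicate k false) ≤ (n + k).choose k * dCountL u := by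
  have hun : u.length + 1 = n := by omega
  rw [dCountL_eq_card u hun, dCountL_eq_card _ (N := n + k) (by simp; omega)]
  exact card_le_choose_mul_card (fun _ hπ => hπ.strictMono_natAdd hun)
    (fun _ hπ => hπ.standardize_castAdd hun)

theorem stmt6 (n k : ℕ) (hn : 1 ≤ n) (hk : 1 ≤ k) (u : List Bool)
    (hu : u.length = n - 1) :
    dCountL (u ++ List.replicate k false) ≤ (n + k).choose k * dCountL u :=
  stmt6_general n k hn u hu
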